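/- arXiv:1107.1536 — 7 statements merged into one kernel-verified Lean document; each statement's English description precedes it below -/
import Mathlib

section
/- For every integer m ≥ 1, the normalized m-th moment Ex[L^m]/λ^m tends to 1/(m+1) as λ → ∞; consequently every moment of L/λ converges to the corresponding moment of the uniform distribution on [0,1]. -/
/-!
Write `p_l = 1 / D_λ(l)` and `w_l = (l + 1)^m - l^m`, so that the moment is `∑ w_l p_l`.
Since `D_λ(l) = ∑_k l(l-1)⋯(l-k+1) / λ^k`, comparison with geometric series gives
`p_l ≥ 1 - l/λ` for every `l`, while for a cutoff `1 ≤ K ≪ λ` the first `K + 1` terms give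
`p_l ≤ (1 - (l + 1 - K)/λ) / (1 - (1 - K/λ)^(K+1))` for `l < λ` and `p_l ≤ 1/(K+1)` for
`l ≥ λ + K`; beyond `2^(m+1) λ` the recursion `D_λ(l+1) = 1 + (l+1)/λ · D_λ(l)` makes `p_l`
decay geometrically. Summation by parts and the comparison of `∑_{l<N} (l+1)^m` with
`∫_0^N x^m dx` evaluate `∑_{l<N} w_l (1 - l/λ)`; with `N = ⌊λ⌋` both bounds become, after
division by `λ^m`, continuous expressions in `N/λ → 1`, `K/λ → 0`, `(1 - K/λ)^(K+1) → 0`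
and `1/(K+1) → 0`, whose common limit is `∫_0^1 m t^(m-1) (1 - t) dt = 1/(m+1)`.
-/

noncomputable def D (lam : ℝ) (l : ℕ) : ℝ :=
  ∑ k ∈ Finset.range (l + 1),
    (Nat.factorial l : ℝ) / ((Nat.factorial (l - k) : ℝ) * lam ^ k)

open Filter Finset Topology

lemma D_eq_sum_descFactorial (lam : ℝ) (l : ℕ) :
    D lam l = ∑ k ∈ range (l + 1), (l.descFactorial k : ℝ) / lam ^ k := by
  refine sum_congr rfl fun k hk => ?_
  rw [← Nat.factorial_mul_descFactorial (Nat.lt_succ_iff.mp (mem_range.mp hk)), Nat.cast_mul,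
    mul_div_mul_left _ _ (by positivity)]

lemma D_succ {lam : ℝ} (hlam : lam ≠ 0) (l : ℕ) :
    D lam (l + 1) = 1 + (l + 1) / lam * D lam l := by
  rw [D_eq_sum_descFactorial, D_eq_sum_descFactorial, sum_range_succ', mul_sum, add_comm]
  congr 1
  · simp
  · refine sum_congr rfl fun k _ => ?_
    rw [Nat.succ_descFactorial_succ]
    push_cast
    field_simp
    ring

lemma one_le_D {lam : ℝ} (hlam : 0 ≤ lam) (l : ℕ) : 1 ≤ D lam l := by
  rw [D_eq_sum_descFactorial]
  simpa using single_le_sum (f := fun k => (l.descFactorial k : ℝ) / lam ^ k)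
    (fun k _ => by positivity) (mem_range.mpr l.succ_pos)

lemma one_sub_div_mul_D_le_one {lam : ℝ} (hlam : 0 < lam) (l : ℕ) :
    (1 - l / lam) * D lam l ≤ 1 := by
  rcases le_or_gt lam l with hl | hl
  · have : 1 - l / lam ≤ 0 := by rw [sub_nonpos, one_le_div hlam]; exact hl
    nlinarith [one_le_D hlam.le l]
  have hs : 0 ≤ 1 - l / lam := by rw [sub_nonneg, div_le_one hlam]; exact hl.le
  calc (1 - l / lam) * D lam l
        ≤ (1 - l / lam) * ∑ k ∈ range (l + 1), ((l : ℝ) / lam) ^ k := by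
        rw [D_eq_sum_descFactorial]
        gcongr with k
        rw [div_pow]
        gcongr
        exact_mod_cast Nat.descFactorial_le_pow l k
    _ = 1 - ((l : ℝ) / lam) ^ (l + 1) := mul_neg_geom_sum _ _
    _ ≤ 1 := by simp only [sub_le_self_iff]; positivity

lemma sum_pow_le_D {lam : ℝ} (hlam : 0 < lam) {K l : ℕ} (hKl : K ≤ l) :
    ∑ k ∈ range (K + 1), (((l : ℝ) + 1 - K) / lam) ^ k ≤ D lam l := by
  rw [D_eq_sum_descFactorial]
  refine (sum_le_sum fun k hk => ?_).trans
    (sum_le_sum_of_subset_of_nonneg (range_subset_range.mpr (by omega)) fun _ _ _ => by positivity)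
  have hk : k ≤ K := Nat.lt_succ_iff.mp (mem_range.mp hk)
  rw [div_pow]
  gcongr
  calc ((l : ℝ) + 1 - K) ^ k ≤ ((l + 1 - k : ℕ) : ℝ) ^ k := by
        gcongr
        · have : (K : ℝ) ≤ l := by exact_mod_cast hKl
          linarith
        · rw [Nat.cast_sub (by omega)]; push_cast; gcongr
    _ ≤ l.descFactorial k := by exact_mod_cast Nat.pow_sub_le_descFactorial l k

lemma one_sub_pow_le_mul_D {lam : ℝ} (hlam : 0 < lam) {K l : ℕ} (hK : (K : ℝ) ≤ lam)
    (hl : (l : ℝ) + 1 ≤ lam) :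
    1 - (1 - K / lam) ^ (K + 1) ≤ (1 - (l + 1 - K) / lam) * D lam l := by
  have hε : 0 ≤ (1 - K / lam) ^ (K + 1) :=
    pow_nonneg (by rw [sub_nonneg, div_le_one hlam]; exact hK) _
  rcases le_or_gt K l with hKl | hlK
  · set r := ((l : ℝ) + 1 - K) / lam
    have hKl' : (K : ℝ) ≤ l := by exact_mod_cast hKl
    have hr0 : 0 ≤ r := div_nonneg (by linarith) hlam.le
    have hr1 : r ≤ 1 - K / lam := by
      rw [div_le_iff₀ hlam, sub_mul, div_mul_cancel₀ _ hlam.ne']; linarith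
    calc 1 - (1 - K / lam) ^ (K + 1) ≤ 1 - r ^ (K + 1) := by gcongr
      _ = (1 - r) * ∑ k ∈ range (K + 1), r ^ k := (mul_neg_geom_sum r _).symm
      _ ≤ (1 - r) * D lam l := by
        gcongr
        · linarith [hr1, div_nonneg (Nat.cast_nonneg K) hlam.le]
        · exact sum_pow_le_D hlam hKl
  · have hlK' : (l : ℝ) + 1 ≤ K := by exact_mod_cast hlK
    have h1 : 1 ≤ 1 - (l + 1 - K) / lam := by
      rw [le_sub_self_iff]; exact div_nonpos_of_nonpos_of_nonneg (by linarith) hlam.le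
    nlinarith [one_le_D hlam.le l]

lemma add_one_le_D {lam : ℝ} (hlam : 0 < lam) {K l : ℕ} (hl : lam + K ≤ l + 1) :
    (K : ℝ) + 1 ≤ D lam l := by
  have hKl : K ≤ l := by
    have : (K : ℝ) < l + 1 := by linarith
    exact_mod_cast Nat.lt_succ_iff.mp (by exact_mod_cast this)
  calc (K : ℝ) + 1 = ∑ k ∈ range (K + 1), (1 : ℝ) := by simp
    _ ≤ ∑ k ∈ range (K + 1), (((l : ℝ) + 1 - K) / lam) ^ k := by
        gcongr with k
        exact one_le_pow₀ (by rw [one_le_div hlam]; linarith)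
    _ ≤ D lam l := sum_pow_le_D hlam hKl

lemma mul_D_le_D_succ {lam q : ℝ} (hlam : 0 < lam) {l : ℕ} (hl : q * lam ≤ l + 1) :
    q * D lam l ≤ D lam (l + 1) := by
  rw [D_succ hlam.ne']
  have : q ≤ (l + 1) / lam := by rw [le_div_iff₀ hlam]; exact hl
  nlinarith [one_le_D hlam.le l]

lemma pow_mul_D_le_D_add {lam q : ℝ} (hlam : 0 < lam) (hq : 0 ≤ q) {l : ℕ}
    (hl : q * lam ≤ l + 1) (j : ℕ) : q ^ j * D lam l ≤ D lam (l + j) := by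
  induction j with
  | zero => simp
  | succ j ih =>
    calc q ^ (j + 1) * D lam l = q * (q ^ j * D lam l) := by ring
      _ ≤ q * D lam (l + j) := by gcongr
      _ ≤ D lam (l + j + 1) := mul_D_le_D_succ hlam (by push_cast; linarith)

noncomputable def momentWeight (m l : ℕ) : ℝ := ((l : ℝ) + 1) ^ m - (l : ℝ) ^ m

lemma momentWeight_nonneg (m l : ℕ) : 0 ≤ momentWeight m l :=
  sub_nonneg.mpr (pow_le_pow_left₀ l.cast_nonneg (by linarith) m)

lemma momentWeight_le (m l : ℕ) : momentWeight m l ≤ ((l : ℝ) + 1) ^ m :=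
  sub_le_self _ (by positivity)

lemma sum_Ico_momentWeight (m : ℕ) {a b : ℕ} (hab : a ≤ b) :
    ∑ l ∈ Ico a b, momentWeight m l = (b : ℝ) ^ m - (a : ℝ) ^ m := by
  simpa [momentWeight] using sum_Ico_sub (fun l : ℕ => (l : ℝ) ^ m) hab

lemma sum_range_momentWeight {m : ℕ} (hm : m ≠ 0) (n : ℕ) :
    ∑ l ∈ range n, momentWeight m l = (n : ℝ) ^ m := by
  simpa [momentWeight, hm] using sum_range_sub (fun l : ℕ => (l : ℝ) ^ m) n

lemma sum_range_pow_le (m n : ℕ) :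
    ∑ i ∈ range n, (i : ℝ) ^ m ≤ (n : ℝ) ^ (m + 1) / (m + 1) := by
  have h := MonotoneOn.sum_le_integral (x₀ := 0) (a := n) (f := fun x : ℝ => x ^ m)
    fun x hx y _ hxy => pow_le_pow_left₀ hx.1 hxy m
  simpa [integral_pow] using h

lemma le_sum_range_add_one_pow (m n : ℕ) :
    (n : ℝ) ^ (m + 1) / (m + 1) ≤ ∑ i ∈ range n, ((i : ℝ) + 1) ^ m := by
  have h := MonotoneOn.integral_le_sum (x₀ := 0) (a := n) (f := fun x : ℝ => x ^ m)
    fun x hx y _ hxy => pow_le_pow_left₀ hx.1 hxy m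
  simpa [integral_pow] using h

/-- `E[min(U, t)^m]` for `U` uniform on `[0, 1]`. -/
noncomputable def uniformTruncMoment (m : ℕ) (t : ℝ) : ℝ := t ^ m * (1 - m / (m + 1) * t)

lemma uniformTruncMoment_one (m : ℕ) : uniformTruncMoment m 1 = 1 / (m + 1) := by
  rw [uniformTruncMoment]
  field_simp
  ring

lemma continuous_uniformTruncMoment (m : ℕ) : Continuous (uniformTruncMoment m) := by
  unfold uniformTruncMoment
  fun_prop

lemma sum_momentWeight_mul_one_sub_div {m : ℕ} (hm : m ≠ 0) {lam : ℝ} (hlam : lam ≠ 0)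
    (n : ℕ) :
    ∑ l ∈ range n, momentWeight m l * (1 - l / lam)
      = (n : ℝ) ^ m - ((n : ℝ) ^ (m + 1) - ∑ l ∈ range n, ((l : ℝ) + 1) ^ m) / lam := by
  have htel : ∑ l ∈ range n, (((l : ℝ) + 1) ^ (m + 1) - (l : ℝ) ^ (m + 1))
      = (n : ℝ) ^ (m + 1) := by
    simpa using sum_range_sub (fun l : ℕ => (l : ℝ) ^ (m + 1)) n
  rw [← htel, ← sum_range_momentWeight hm n, ← sum_sub_distrib, sum_div, ← sum_sub_distrib]
  refine sum_congr rfl fun l _ => ?_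
  simp only [momentWeight]
  field_simp
  ring

lemma pow_mul_uniformTruncMoment_le {m : ℕ} (hm : m ≠ 0) {lam : ℝ} (hlam : 0 < lam)
    (n : ℕ) :
    lam ^ m * uniformTruncMoment m (n / lam)
      ≤ ∑ l ∈ range n, momentWeight m l * (1 - l / lam) := by
  rw [sum_momentWeight_mul_one_sub_div hm hlam.ne']
  have h := le_sum_range_add_one_pow m n
  have key : lam ^ m * uniformTruncMoment m (n / lam)
      = (n : ℝ) ^ m - ((n : ℝ) ^ (m + 1) - (n : ℝ) ^ (m + 1) / (m + 1)) / lam := by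
    rw [uniformTruncMoment, div_pow]
    field_simp
    ring
  rw [key]
  gcongr

lemma sum_le_pow_mul_uniformTruncMoment {m : ℕ} (hm : m ≠ 0) {lam : ℝ} (hlam : 0 < lam)
    (n : ℕ) :
    ∑ l ∈ range n, momentWeight m l * (1 - l / lam)
      ≤ lam ^ m * uniformTruncMoment m (n / lam) + (n : ℝ) ^ m / lam := by
  rw [sum_momentWeight_mul_one_sub_div hm hlam.ne']
  have h1 := sum_range_pow_le m n
  have h2 : ∑ l ∈ range n, ((l : ℝ) + 1) ^ m
      = ∑ l ∈ range n, (l : ℝ) ^ m + (n : ℝ) ^ m := by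
    rw [← sum_range_momentWeight hm n, ← sum_add_distrib]
    simp [momentWeight]
  have key : lam ^ m * uniformTruncMoment m (n / lam) + (n : ℝ) ^ m / lam
      = (n : ℝ) ^ m
          - ((n : ℝ) ^ (m + 1) - ((n : ℝ) ^ (m + 1) / (m + 1) + (n : ℝ) ^ m)) / lam := by
    rw [uniformTruncMoment, div_pow]
    field_simp
    ring
  rw [key, h2]
  gcongr

/-- The ratio `2^(m+1)` beats the growth `(l + j + 1)^m ≤ ((l + 1) 2^j)^m` of the weights. -/
lemma momentWeight_div_D_add_le {lam : ℝ} (hlam : 0 < lam) (m : ℕ) {l : ℕ}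
    (hl : 2 ^ (m + 1) * lam ≤ l + 1) (j : ℕ) :
    momentWeight m (j + l) / D lam (j + l) ≤ ((l : ℝ) + 1) ^ m / D lam l * (1 / 2) ^ j := by
  have hD := pow_mul_D_le_D_add hlam (by positivity) hl j
  rw [add_comm l] at hD
  have hj : ((j + l : ℕ) : ℝ) + 1 ≤ ((l : ℝ) + 1) * 2 ^ j := by
    have : (j : ℝ) + 1 ≤ 2 ^ j := by exact_mod_cast Nat.lt_two_pow_self
    push_cast
    nlinarith [(Nat.cast_nonneg l : (0 : ℝ) ≤ l)]
  have hDl := one_le_D hlam.le l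
  calc momentWeight m (j + l) / D lam (j + l)
      ≤ (((l : ℝ) + 1) * 2 ^ j) ^ m / ((2 ^ (m + 1)) ^ j * D lam l) := by
        gcongr
        exact (momentWeight_le m _).trans (pow_le_pow_left₀ (by positivity) hj m)
    _ = ((l : ℝ) + 1) ^ m / D lam l * (1 / 2) ^ j := by
        rw [mul_pow, ← pow_mul, ← pow_mul, add_one_mul, pow_add, mul_comm j m, one_div, inv_pow]
        field_simp

lemma summable_momentWeight_div_D {lam : ℝ} (hlam : 0 < lam) (m : ℕ) :
    Summable fun l => momentWeight m l / D lam l := by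
  obtain ⟨l, hl⟩ : ∃ l : ℕ, 2 ^ (m + 1) * lam ≤ l + 1 :=
    ⟨⌈2 ^ (m + 1) * lam⌉₊, (Nat.le_ceil _).trans (by linarith)⟩
  exact (summable_nat_add_iff l).mp <| Summable.of_nonneg_of_le
    (fun j => div_nonneg (momentWeight_nonneg m _) (by linarith [one_le_D hlam.le (j + l)]))
    (momentWeight_div_D_add_le hlam m hl) (summable_geometric_two.mul_left _)

lemma tsum_momentWeight_div_D_add_le {lam : ℝ} (hlam : 0 < lam) (m : ℕ) {l : ℕ}
    (hl : 2 ^ (m + 1) * lam ≤ l + 1) :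
    ∑' j, momentWeight m (j + l) / D lam (j + l) ≤ 2 * ((l : ℝ) + 1) ^ m / D lam l := by
  refine (((summable_nat_add_iff l).mpr (summable_momentWeight_div_D hlam m)).tsum_le_tsum
    (momentWeight_div_D_add_le hlam m hl) (summable_geometric_two.mul_left _)).trans_eq ?_
  rw [tsum_mul_left, tsum_geometric_two]
  ring

lemma uniformTruncMoment_le_tsum_div {m : ℕ} (hm : m ≠ 0) {lam : ℝ} (hlam : 0 < lam)
    (n : ℕ) :
    uniformTruncMoment m (n / lam) ≤ (∑' l, momentWeight m l / D lam l) / lam ^ m := by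
  rw [le_div_iff₀ (by positivity), mul_comm]
  refine (pow_mul_uniformTruncMoment_le hm hlam n).trans <| (sum_le_sum fun l _ => ?_).trans <|
    (summable_momentWeight_div_D hlam m).sum_le_tsum _ fun l _ =>
      div_nonneg (momentWeight_nonneg m l) (by linarith [one_le_D hlam.le l])
  have hD : 0 < D lam l := by linarith [one_le_D hlam.le l]
  rw [div_eq_mul_one_div (momentWeight m l)]
  gcongr
  · exact momentWeight_nonneg m l
  · rw [le_div_iff₀ hD]; exact one_sub_div_mul_D_le_one hlam l

lemma sum_range_momentWeight_div_D_le {m : ℕ} (hm : m ≠ 0) {lam : ℝ} (hlam : 0 < lam)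
    {N K : ℕ} (hN : (N : ℝ) ≤ lam) (hK1 : 1 ≤ K) (hK : (K : ℝ) ≤ lam) :
    ∑ l ∈ range N, momentWeight m l / D lam l
      ≤ (lam ^ m * uniformTruncMoment m (N / lam) + (K + 1) * (N : ℝ) ^ m / lam)
          / (1 - (1 - K / lam) ^ (K + 1)) := by
  have hε : 0 < 1 - (1 - K / lam) ^ (K + 1) := by
    have hK1' : (0 : ℝ) < K / lam := div_pos (by exact_mod_cast hK1) hlam
    exact sub_pos.mpr (pow_lt_one₀ (by rw [sub_nonneg, div_le_one hlam]; exact hK)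
      (by linarith) K.succ_ne_zero)
  have hpt : ∀ l ∈ range N, momentWeight m l / D lam l
      ≤ (momentWeight m l * (1 - l / lam) + K / lam * momentWeight m l)
          / (1 - (1 - K / lam) ^ (K + 1)) := by
    intro l hl
    have hl' : (l : ℝ) + 1 ≤ lam := by
      have : l + 1 ≤ N := mem_range.mp hl
      exact le_trans (by exact_mod_cast this) hN
    have hD : 0 < D lam l := by linarith [one_le_D hlam.le l]
    have key := one_sub_pow_le_mul_D hlam hK hl'
    rw [div_le_div_iff₀ hD hε]
    have hw := momentWeight_nonneg m l
    have hnum : 1 - (l + 1 - K) / lam ≤ 1 - l / lam + K / lam := by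
      have : ((l : ℝ) + 1 - K) / lam = l / lam + 1 / lam - K / lam := by ring
      linarith [one_div_nonneg.mpr hlam.le]
    calc momentWeight m l * (1 - (1 - K / lam) ^ (K + 1))
        ≤ momentWeight m l * ((1 - (l + 1 - K) / lam) * D lam l) := by gcongr
      _ ≤ momentWeight m l * ((1 - l / lam + K / lam) * D lam l) := by gcongr
      _ = (momentWeight m l * (1 - l / lam) + K / lam * momentWeight m l) * D lam l := by ring
  refine (sum_le_sum hpt).trans ?_
  rw [← sum_div, sum_add_distrib, ← mul_sum, sum_range_momentWeight hm]
  gcongr ?_ / _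
  have := sum_le_pow_mul_uniformTruncMoment hm hlam N
  have h : (K : ℝ) / lam * N ^ m + N ^ m / lam = (K + 1) * N ^ m / lam := by ring
  linarith

lemma sum_Ico_add_tsum_momentWeight_div_D_le {lam : ℝ} (hlam : 0 < lam) (m : ℕ) {a K L : ℕ}
    (ha : lam + K ≤ a + 1) (haL : a ≤ L) (hL : 2 ^ (m + 1) * lam ≤ L + 1) :
    ∑ l ∈ Ico a L, momentWeight m l / D lam l + ∑' j, momentWeight m (j + L) / D lam (j + L)
      ≤ 3 * ((L : ℝ) + 1) ^ m / (K + 1) := by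
  have haL' : (a : ℝ) ≤ L := by exact_mod_cast haL
  have hIco : ∑ l ∈ Ico a L, momentWeight m l / D lam l ≤ ((L : ℝ) + 1) ^ m / (K + 1) :=
    calc ∑ l ∈ Ico a L, momentWeight m l / D lam l
        ≤ ∑ l ∈ Ico a L, momentWeight m l / (K + 1) := by
          refine sum_le_sum fun l hl => div_le_div_of_nonneg_left (momentWeight_nonneg m l)
            (by positivity) (add_one_le_D hlam ?_)
          have : (a : ℝ) ≤ l := by exact_mod_cast (mem_Ico.mp hl).1
          linarith
      _ = ((L : ℝ) ^ m - (a : ℝ) ^ m) / (K + 1) := by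
          rw [← sum_div, sum_Ico_momentWeight m haL]
      _ ≤ ((L : ℝ) + 1) ^ m / (K + 1) := by
          gcongr
          linarith [pow_le_pow_left₀ (Nat.cast_nonneg L : (0 : ℝ) ≤ L) (le_add_of_nonneg_right
            zero_le_one) m, pow_nonneg (Nat.cast_nonneg a : (0 : ℝ) ≤ a) m]
  have htail : ∑' j, momentWeight m (j + L) / D lam (j + L)
      ≤ 2 * ((L : ℝ) + 1) ^ m / (K + 1) :=
    (tsum_momentWeight_div_D_add_le hlam m hL).trans
      (by gcongr; exact add_one_le_D hlam (by linarith))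
  have h3 : 3 * ((L : ℝ) + 1) ^ m / (K + 1)
      = ((L : ℝ) + 1) ^ m / (K + 1) + 2 * ((L : ℝ) + 1) ^ m / (K + 1) := by ring
  linarith

/-- The three summands bound, in units of `λ^m`, the contributions of `l < N`, of
`N ≤ l < N + K` and of `l ≥ N + K`. -/
noncomputable def momentUpperBound (m : ℕ) (lam : ℝ) (N K : ℕ) : ℝ :=
  (uniformTruncMoment m (N / lam) + (K / lam + lam⁻¹) * (N / lam) ^ m)
      / (1 - (1 - K / lam) ^ (K + 1))
    + ((N / lam + K / lam) ^ m - (N / lam) ^ m)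
    + 3 * (2 ^ (m + 1) * (N / lam + lam⁻¹) + lam⁻¹) ^ m / (K + 1)

lemma tsum_div_pow_le_momentUpperBound {m : ℕ} (hm : m ≠ 0) {lam : ℝ} (hlam : 0 < lam)
    {N K : ℕ} (hN : (N : ℝ) ≤ lam) (hN' : lam < N + 1) (hK1 : 1 ≤ K) (hKN : K ≤ N) :
    (∑' l, momentWeight m l / D lam l) / lam ^ m ≤ momentUpperBound m lam N K := by
  set L := 2 ^ (m + 1) * (N + 1)
  have hNKL : N + K ≤ L := by
    have : 2 ≤ 2 ^ (m + 1) := Nat.le_self_pow (by omega) 2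
    show N + K ≤ 2 ^ (m + 1) * (N + 1)
    nlinarith
  have hlow := sum_range_momentWeight_div_D_le hm hlam hN hK1
    (le_trans (by exact_mod_cast hKN) hN)
  have hmid : ∑ l ∈ Ico N (N + K), momentWeight m l / D lam l
      ≤ ((N + K : ℕ) : ℝ) ^ m - (N : ℝ) ^ m := by
    rw [← sum_Ico_momentWeight m (Nat.le_add_right N K)]
    exact sum_le_sum fun l _ => div_le_self (momentWeight_nonneg m l) (one_le_D hlam.le l)
  have hhigh := sum_Ico_add_tsum_momentWeight_div_D_le hlam m (K := K) (by push_cast; linarith)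
    hNKL (by push_cast [L]; nlinarith [pow_pos (two_pos : (0 : ℝ) < 2) (m + 1)])
  have hsplit : ∑' l, momentWeight m l / D lam l
      = ∑ l ∈ range N, momentWeight m l / D lam l
        + ∑ l ∈ Ico N (N + K), momentWeight m l / D lam l
        + (∑ l ∈ Ico (N + K) L, momentWeight m l / D lam l
          + ∑' j, momentWeight m (j + L) / D lam (j + L)) := by
    rw [← (summable_momentWeight_div_D hlam m).sum_add_tsum_nat_add L,
      ← sum_range_add_sum_Ico _ hNKL, ← sum_range_add_sum_Ico _ (Nat.le_add_right N K),
      add_assoc]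
  have hU : momentUpperBound m lam N K * lam ^ m
      = (lam ^ m * uniformTruncMoment m (N / lam) + (K + 1) * (N : ℝ) ^ m / lam)
          / (1 - (1 - K / lam) ^ (K + 1))
        + (((N + K : ℕ) : ℝ) ^ m - (N : ℝ) ^ m) + 3 * ((L : ℝ) + 1) ^ m / (K + 1) := by
    have e1 : (N : ℝ) / lam + K / lam = (N + K) / lam := by ring
    have e2 : 2 ^ (m + 1) * ((N : ℝ) / lam + lam⁻¹) + lam⁻¹
        = (2 ^ (m + 1) * (N + 1) + 1) / lam := by ring
    simp only [momentUpperBound, L, e1, e2]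
    push_cast
    rw [div_pow, div_pow, div_pow]
    field_simp
  rw [div_le_iff₀ (by positivity), hsplit, hU]
  linarith

/-- Any `K` with `K/λ → 0` and `K²/λ → ∞` would do. -/
noncomputable def cutoff (lam : ℝ) : ℕ := ⌈lam ^ (3 / 4 : ℝ)⌉₊

lemma tendsto_cutoff_atTop : Tendsto (fun lam => (cutoff lam : ℝ)) atTop atTop :=
  tendsto_atTop_mono (fun _ => Nat.le_ceil _) (tendsto_rpow_atTop (by norm_num))

lemma tendsto_cutoff_div : Tendsto (fun lam => (cutoff lam : ℝ) / lam) atTop (𝓝 0) := by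
  have hlim : Tendsto (fun lam : ℝ => lam ^ (-(1 / 4) : ℝ) + lam⁻¹) atTop (𝓝 0) := by
    simpa using
      (tendsto_rpow_neg_atTop (by norm_num : (0 : ℝ) < 1 / 4)).add tendsto_inv_atTop_zero
  refine tendsto_of_tendsto_of_tendsto_of_le_of_le' tendsto_const_nhds hlim ?_ ?_
  · filter_upwards [eventually_gt_atTop 0] with lam hlam using by positivity
  · filter_upwards [eventually_gt_atTop 0] with lam hlam
    have hK := Nat.ceil_lt_add_one (Real.rpow_nonneg hlam.le (3 / 4 : ℝ))
    calc (cutoff lam : ℝ) / lam ≤ (lam ^ (3 / 4 : ℝ) + 1) / lam := by gcongr; exact hK.le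
      _ = lam ^ (-(1 / 4) : ℝ) + lam⁻¹ := by
        rw [add_div, ← Real.rpow_sub_one hlam.ne', one_div]; norm_num

lemma eventually_cutoff_le_floor : ∀ᶠ lam : ℝ in atTop, cutoff lam ≤ ⌊lam⌋₊ := by
  filter_upwards [eventually_gt_atTop 0, (tendsto_order.1 tendsto_cutoff_div).2 1 one_pos]
    with lam hlam hK
  exact Nat.le_floor ((div_lt_one hlam).mp hK).le

lemma tendsto_one_sub_cutoff_div_pow :
    Tendsto (fun lam => (1 - cutoff lam / lam) ^ (cutoff lam + 1)) atTop (𝓝 0) := by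
  have hlim : Tendsto (fun lam : ℝ => Real.exp (-lam ^ (1 / 2 : ℝ))) atTop (𝓝 0) :=
    Real.tendsto_exp_neg_atTop_nhds_zero.comp (tendsto_rpow_atTop (by norm_num))
  refine tendsto_of_tendsto_of_tendsto_of_le_of_le' tendsto_const_nhds hlim ?_ ?_
  · filter_upwards [eventually_gt_atTop 0, eventually_cutoff_le_floor] with lam hlam hK
    have : (cutoff lam : ℝ) ≤ lam := (Nat.cast_le.mpr hK).trans (Nat.floor_le hlam.le)
    exact pow_nonneg (by rw [sub_nonneg, div_le_one hlam]; exact this) _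
  · filter_upwards [eventually_gt_atTop 0, eventually_cutoff_le_floor] with lam hlam hK
    have hKlam : (cutoff lam : ℝ) ≤ lam := (Nat.cast_le.mpr hK).trans (Nat.floor_le hlam.le)
    set K := cutoff lam
    have hK34 : lam ^ (3 / 4 : ℝ) ≤ K := Nat.le_ceil _
    have hsq : lam ^ (1 / 2 : ℝ) ≤ (K + 1) * (K / lam) := by
      have : lam ^ (1 / 2 : ℝ) * lam = lam ^ (3 / 4 : ℝ) * lam ^ (3 / 4 : ℝ) := by
        rw [← Real.rpow_add hlam, ← Real.rpow_add_one hlam.ne']; norm_num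
      rw [mul_div_assoc', le_div_iff₀ hlam, this]
      have h0 : 0 ≤ lam ^ (3 / 4 : ℝ) := by positivity
      nlinarith
    calc (1 - K / lam) ^ (K + 1) ≤ Real.exp (-(K / lam)) ^ (K + 1) := by
          gcongr
          · rw [sub_nonneg, div_le_one hlam]; exact hKlam
          · exact Real.one_sub_le_exp_neg _
      _ = Real.exp (-((K + 1) * (K / lam))) := by
          rw [← Real.exp_nat_mul]; push_cast; ring_nf
      _ ≤ Real.exp (-lam ^ (1 / 2 : ℝ)) := by gcongr

lemma tendsto_uniformTruncMoment_floor_div (m : ℕ) :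
    Tendsto (fun lam => uniformTruncMoment m (⌊lam⌋₊ / lam)) atTop (𝓝 (1 / (m + 1))) := by
  rw [← uniformTruncMoment_one]
  exact ((continuous_uniformTruncMoment m).tendsto 1).comp tendsto_nat_floor_div_atTop

lemma tendsto_momentUpperBound (m : ℕ) :
    Tendsto (fun lam => momentUpperBound m lam ⌊lam⌋₊ (cutoff lam)) atTop
      (𝓝 (1 / (m + 1))) := by
  have ht := tendsto_nat_floor_div_atTop (R := ℝ)
  have hκ := tendsto_cutoff_div
  have hinv := tendsto_inv_atTop_zero (𝕜 := ℝ)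
  have hA := ((tendsto_uniformTruncMoment_floor_div m).add ((hκ.add hinv).mul (ht.pow m))).div
    (tendsto_const_nhds.sub tendsto_one_sub_cutoff_div_pow) (by norm_num : (1 : ℝ) - 0 ≠ 0)
  have hB := ((ht.add hκ).pow m).sub (ht.pow m)
  have hC := ((((ht.add hinv).const_mul (2 ^ (m + 1))).add hinv).pow m |>.const_mul 3).div_atTop
    (tendsto_cutoff_atTop.atTop_add (tendsto_const_nhds (x := (1 : ℝ))))
  convert (hA.add hB).add hC using 2
  · rfl
  · simp

/-- For every integer `m ≥ 1`, the normalized `m`-th moment `Ex[L^m]/λ^m` tends to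
`1/(m+1)` as `λ → ∞`, where `Ex[L^m] = ∑_{l=0}^∞ ((l+1)^m − l^m)/D_λ(l)`; i.e. the
moments of `L/λ` converge to the moments of the uniform distribution on `[0,1]`. -/
theorem normalized_moments_tendsto (m : ℕ) (hm : 1 ≤ m) :
    Filter.Tendsto
      (fun lam : ℝ => (∑' l : ℕ, (((l : ℝ) + 1) ^ m - (l : ℝ) ^ m) / D lam l) / lam ^ m)
      Filter.atTop (nhds (1 / (m + 1))) := by
  have hm0 : m ≠ 0 := by omega
  refine tendsto_of_tendsto_of_tendsto_of_le_of_le' (tendsto_uniformTruncMoment_floor_div m)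
    (tendsto_momentUpperBound m) ?_ ?_
  · filter_upwards [eventually_gt_atTop 0] with lam hlam
    exact uniformTruncMoment_le_tsum_div hm0 hlam ⌊lam⌋₊
  · filter_upwards [eventually_gt_atTop 0, eventually_cutoff_le_floor] with lam hlam hK
    exact tsum_div_pow_le_momentUpperBound hm0 hlam (Nat.floor_le hlam.le)
      (Nat.lt_floor_add_one lam) (Nat.one_le_ceil_iff.mpr (by positivity)) hK
end

section
/- For every real t with 0 < t < 1, the probability Pr[L > ⌊tλ⌋] = 1/D_λ(⌊tλ⌋) tends to 1 − t as λ → ∞; that is, the distribution of L/λ tends to the uniform distribution on [0,1]. -/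
open Filter Finset

lemma D_eq (lam : ℝ) (l : ℕ) :
    D lam l = ∑ k ∈ Finset.range (l + 1), (l.descFactorial k : ℝ) / lam ^ k := by
  unfold D
  refine Finset.sum_congr rfl fun k hk => ?_
  have hkl : k ≤ l := Nat.lt_succ_iff.mp (Finset.mem_range.mp hk)
  have h : ((l - k).factorial : ℝ) * (l.descFactorial k : ℝ) = (l.factorial : ℝ) := by
    rw [← Nat.cast_mul, Nat.factorial_mul_descFactorial hkl]
  have hfac : ((l - k).factorial : ℝ) ≠ 0 := by positivity
  rw [← h, mul_div_mul_left _ _ hfac]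

lemma floor_div_tendsto (t : ℝ) (ht0 : 0 < t) (m : ℕ) :
    Filter.Tendsto (fun lam : ℝ => ((⌊t * lam⌋₊ : ℝ) - m) / lam)
      Filter.atTop (nhds t) := by
  have hlow : Filter.Tendsto (fun lam : ℝ => t - (1 + m) / lam) Filter.atTop (nhds t) := by
    have := tendsto_const_nhds (α := ℝ) (x := t) |>.sub
      ((tendsto_const_nhds (α := ℝ) (x := (1 + m : ℝ))).div_atTop tendsto_id)
    simpa using this
  have hhigh : Filter.Tendsto (fun _ : ℝ => t) Filter.atTop (nhds t) := tendsto_const_nhds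
  refine tendsto_of_tendsto_of_tendsto_of_le_of_le' hlow hhigh ?_ ?_
  · filter_upwards [eventually_gt_atTop (0 : ℝ)] with lam hlam
    have h1 : t * lam - 1 < (⌊t * lam⌋₊ : ℝ) := Nat.sub_one_lt_floor _
    rw [le_div_iff₀ hlam, sub_mul, div_mul_cancel₀ _ hlam.ne']
    linarith
  · filter_upwards [eventually_gt_atTop (0 : ℝ)] with lam hlam
    have h2 : (⌊t * lam⌋₊ : ℝ) ≤ t * lam := Nat.floor_le (by positivity)
    rw [div_le_iff₀ hlam]
    have : (m : ℝ) ≥ 0 := Nat.cast_nonneg m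
    nlinarith

lemma D_tendsto (t : ℝ) (ht0 : 0 < t) (ht1 : t < 1) :
    Filter.Tendsto (fun lam : ℝ => D lam ⌊t * lam⌋₊)
      Filter.atTop (nhds (1 / (1 - t))) := by
  have h1t : (0 : ℝ) < 1 - t := by linarith
  rw [Metric.tendsto_nhds]
  intro ε hε
  -- choose m with ∑_{k < m+1} t^k > 1/(1-t) - ε/2
  have hgeom : Filter.Tendsto (fun n => ∑ k ∈ Finset.range n, t ^ k)
      Filter.atTop (nhds (1 / (1 - t))) := by
    have := (hasSum_geometric_of_lt_one ht0.le ht1).tendsto_sum_nat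
    simpa [one_div] using this
  obtain ⟨m, hm⟩ := (hgeom.eventually (eventually_gt_nhds (show 1 / (1 - t) - ε / 2 < 1 / (1 - t) by linarith))).exists
  set s := ∑ k ∈ Finset.range m, t ^ k with hs
  -- the lower bound function
  have hbase := floor_div_tendsto t ht0 m
  have hg : Filter.Tendsto
      (fun lam : ℝ => ∑ k ∈ Finset.range m, (((⌊t * lam⌋₊ : ℝ) - m) / lam) ^ k)
      Filter.atTop (nhds s) := by
    apply tendsto_finset_sum
    intro k _
    exact hbase.pow k
  have hgev : ∀ᶠ lam : ℝ in atTop,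
      ∑ k ∈ Finset.range m, (((⌊t * lam⌋₊ : ℝ) - m) / lam) ^ k > s - ε / 2 :=
    hg.eventually (eventually_gt_nhds (by linarith))
  -- eventually ⌊t·λ⌋ ≥ m and λ > 0 and base ≥ 0
  have hfloor_big : ∀ᶠ lam : ℝ in atTop, m ≤ ⌊t * lam⌋₊ := by
    have : Filter.Tendsto (fun lam : ℝ => t * lam) Filter.atTop Filter.atTop :=
      Filter.Tendsto.const_mul_atTop ht0 tendsto_id
    exact (tendsto_nat_floor_atTop.comp this).eventually_ge_atTop m
  filter_upwards [hgev, hfloor_big, eventually_gt_atTop (0 : ℝ)] with lam hglam hml hlam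
  set l := ⌊t * lam⌋₊ with hl
  have hbase_nonneg : (0 : ℝ) ≤ ((l : ℝ) - m) / lam := by
    apply div_nonneg _ hlam.le
    have : (m : ℝ) ≤ l := Nat.cast_le.mpr hml
    linarith
  -- Upper bound : D ≤ 1/(1-t)
  have hterm_nonneg : ∀ k ∈ Finset.range (l + 1), (0 : ℝ) ≤ (l.descFactorial k : ℝ) / lam ^ k :=
    fun k _ => by positivity
  have hupper : D lam l ≤ 1 / (1 - t) := by
    rw [D_eq]
    have h1 : ∀ k ∈ Finset.range (l + 1), (l.descFactorial k : ℝ) / lam ^ k ≤ t ^ k := by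
      intro k _
      have hd : (l.descFactorial k : ℝ) ≤ (l : ℝ) ^ k := by
        calc (l.descFactorial k : ℝ) ≤ ((l ^ k : ℕ) : ℝ) :=
              Nat.cast_le.mpr (Nat.descFactorial_le_pow l k)
          _ = (l : ℝ) ^ k := by push_cast; ring
      have hlt : (l : ℝ) ≤ t * lam := Nat.floor_le (by positivity)
      calc (l.descFactorial k : ℝ) / lam ^ k ≤ (l : ℝ) ^ k / lam ^ k := by
            apply div_le_div_of_nonneg_right hd (by positivity) |>.trans_eq rfl
        _ = ((l : ℝ) / lam) ^ k := by rw [div_pow]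
        _ ≤ t ^ k := by
            apply pow_le_pow_left₀ (by positivity)
            rw [div_le_iff₀ hlam]; linarith
    calc ∑ k ∈ Finset.range (l + 1), (l.descFactorial k : ℝ) / lam ^ k
        ≤ ∑ k ∈ Finset.range (l + 1), t ^ k := Finset.sum_le_sum h1
      _ ≤ 1 / (1 - t) := by
          rw [geom_sum_eq (by linarith : t ≠ 1),
            show (t ^ (l+1) - 1)/(t - 1) = (1 - t ^ (l+1))/(1 - t) by
              rw [div_eq_div_iff (by linarith) (by linarith)]; ring]
          rw [div_le_div_iff₀ h1t h1t]
          have : (0:ℝ) ≤ t ^ (l+1) := by positivity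
          nlinarith
  -- Lower bound : D ≥ g lam
  have hlower : ∑ k ∈ Finset.range m, (((l : ℝ) - m) / lam) ^ k ≤ D lam l := by
    rw [D_eq]
    calc ∑ k ∈ Finset.range m, (((l : ℝ) - m) / lam) ^ k
        ≤ ∑ k ∈ Finset.range m, (l.descFactorial k : ℝ) / lam ^ k := by
          apply Finset.sum_le_sum
          intro k hk
          have hkm : k < m := Finset.mem_range.mp hk
          have hdesc : (l - m) ^ k ≤ l.descFactorial k := by
            calc (l - m) ^ k ≤ (l + 1 - k) ^ k := by
                  apply Nat.pow_le_pow_left; omega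
              _ ≤ l.descFactorial k := Nat.pow_sub_le_descFactorial l k
          have hcast : ((l : ℝ) - m) ^ k ≤ (l.descFactorial k : ℝ) := by
            calc ((l : ℝ) - m) ^ k = (((l - m : ℕ) : ℝ)) ^ k := by
                  rw [Nat.cast_sub hml]
              _ = (((l - m) ^ k : ℕ) : ℝ) := by push_cast; ring
              _ ≤ (l.descFactorial k : ℝ) := Nat.cast_le.mpr hdesc
          rw [div_pow]
          exact div_le_div_of_nonneg_right hcast (by positivity) |>.trans_eq rfl
      _ ≤ ∑ k ∈ Finset.range (l + 1), (l.descFactorial k : ℝ) / lam ^ k := by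
          apply Finset.sum_le_sum_of_subset_of_nonneg
          · apply Finset.range_subset_range.mpr; omega
          · intro k _ _; positivity
  have hDgt : 1 / (1 - t) - ε < D lam l := by
    have : s - ε / 2 < D lam l := lt_of_lt_of_le hglam hlower
    linarith [hm]
  rw [Real.dist_eq, abs_lt]
  constructor <;> linarith

/-- For every `0 < t < 1`, `Pr[L > ⌊tλ⌋] = 1/D_λ(⌊tλ⌋)` tends to `1 − t` as `λ → ∞`:
the distribution of `L/λ` tends to the uniform distribution on `[0,1]`. -/
theorem distribution_tendsto_uniform (t : ℝ) (ht0 : 0 < t) (ht1 : t < 1) :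
    Filter.Tendsto (fun lam : ℝ => 1 / D lam ⌊t * lam⌋₊)
      Filter.atTop (nhds (1 - t)) := by
  have h1t : (0 : ℝ) < 1 - t := by linarith
  have h := (D_tendsto t ht0 ht1).inv₀ (by positivity)
  simp only [one_div] at h ⊢
  simpa [inv_inv] using h
end

section
/- There exist constants C > 0 and λ₀ > 0 such that for all real λ ≥ λ₀ and all natural numbers l with l ≥ λ − √λ, one has 1/D_λ(l) ≤ C·e^{−λ}·λ^l/l!. -/
/-!
Since `D_λ(l) = (l! / λ^l) ∑_{j ≤ l} λ^j / j!`, it suffices to bound the truncated exponential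
series below by a constant times `e^λ` once `l ≥ λ - √λ`. Stirling's upper bound
`n! ≤ e √n (n/e)^n` together with `log t ≤ t - 1` shows that every term `λ^j / j!` with
`λ - 2√λ ≤ j ≤ λ` is at least `e^(λ-5) / √λ`, and the interval `[λ - 2√λ, λ - √λ]` contains
about `√λ` such indices, all at most `l`.
-/

open Real Finset Nat

theorem Stirling.stirlingSeq_le_exp_one_div_sqrt_two {n : ℕ} (hn : n ≠ 0) :
    Stirling.stirlingSeq n ≤ exp 1 / √2 := by
  obtain ⟨k, rfl⟩ := Nat.exists_eq_succ_of_ne_zero hn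
  simpa [Stirling.stirlingSeq_one] using Stirling.stirlingSeq'_antitone (Nat.zero_le k)

theorem factorial_le_exp_one_mul_sqrt_mul_pow {n : ℕ} (hn : n ≠ 0) :
    (n ! : ℝ) ≤ exp 1 * √n * (n / exp 1) ^ n := by
  have h := Stirling.stirlingSeq_le_exp_one_div_sqrt_two hn
  rw [Stirling.stirlingSeq, div_le_iff₀ (by positivity), Real.sqrt_mul zero_le_two] at h
  calc (n ! : ℝ) ≤ exp 1 / √2 * (√2 * √n * (n / exp 1) ^ n) := h
    _ = exp 1 * √n * (n / exp 1) ^ n := by field_simp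

theorem exp_sub_sq_div_le_pow {x : ℝ} (hx : 0 < x) (n : ℕ) :
    exp (x - (x - n) ^ 2 / x) ≤ (exp 1 * x / n) ^ n := by
  rcases Nat.eq_zero_or_pos n with rfl | hn
  · simp [sq, hx.ne']
  have hn' : (0 : ℝ) < n := by exact_mod_cast hn
  rw [← exp_log (by positivity : 0 < exp 1 * x / n), ← exp_nat_mul, exp_le_exp,
    log_div (by positivity) hn'.ne', log_mul (by positivity) hx.ne', log_exp]
  have hlog := log_le_sub_one_of_pos (div_pos hn' hx)
  rw [log_div hn'.ne' hx.ne'] at hlog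
  have : x - (x - n) ^ 2 / x = n * (2 - n / x) := by field_simp; ring
  rw [this]
  exact mul_le_mul_of_nonneg_left (by linarith) hn'.le

theorem exp_sub_div_sqrt_le_pow_div_factorial {x : ℝ} (hx : 0 < x) {n : ℕ} (hn : n ≠ 0) :
    exp (x - 1 - (x - n) ^ 2 / x) / √n ≤ x ^ n / n ! := by
  calc exp (x - 1 - (x - n) ^ 2 / x) / √n
      = exp (x - (x - n) ^ 2 / x) / (exp 1 * √n) := by
        rw [sub_right_comm, exp_sub]; field_simp
    _ ≤ (exp 1 * x / n) ^ n / (exp 1 * √n) := by gcongr; exact exp_sub_sq_div_le_pow hx n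
    _ = x ^ n / (exp 1 * √n * (n / exp 1) ^ n) := by
        have h : (exp 1 * x / n) ^ n * (n / exp 1) ^ n = x ^ n := by
          rw [← mul_pow]; congr 1; field_simp
        rw [← h]; field_simp
    _ ≤ x ^ n / n ! := by
        gcongr
        exact factorial_le_exp_one_mul_sqrt_mul_pow hn

theorem D_eq_factorial_div_pow_mul_sum {x : ℝ} (hx : x ≠ 0) (l : ℕ) :
    D x l = l ! / x ^ l * ∑ j ∈ range (l + 1), x ^ j / j ! := by
  rw [D, ← sum_range_reflect, mul_sum]
  refine sum_congr rfl fun j hj => ?_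
  have hjl : j ≤ l := Nat.lt_succ_iff.mp (mem_range.mp hj)
  rw [add_tsub_cancel_right, Nat.sub_sub_self hjl]
  have hpow : x ^ l = x ^ (l - j) * x ^ j := by rw [← pow_add, Nat.sub_add_cancel hjl]
  rw [hpow]
  field_simp

theorem exp_sub_five_div_two_le_sum_range {x : ℝ} (hx : 9 ≤ x) {l : ℕ} (hl : x - √x ≤ l) :
    exp (x - 5) / 2 ≤ ∑ j ∈ range (l + 1), x ^ j / j ! := by
  set r := √x
  have hr2 : r ^ 2 = x := sq_sqrt (by linarith)
  have hr : 3 ≤ r := by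
    rw [show (3 : ℝ) = √9 by rw [show (9 : ℝ) = 3 ^ 2 by norm_num, sqrt_sq zero_le_three]]
    exact sqrt_le_sqrt hx
  set p := ⌈x - 2 * r⌉₊
  set q := ⌊x - r⌋₊
  have hterm : ∀ j ∈ Icc p q, exp (x - 5) / r ≤ x ^ j / j ! := by
    intro j hj
    obtain ⟨hpj, hjq⟩ := mem_Icc.mp hj
    have hj_lo : x - 2 * r ≤ j := Nat.ceil_le.mp hpj
    have hj_hi : (j : ℝ) ≤ x - r := (Nat.le_floor_iff (by nlinarith)).mp hjq
    have hj0 : (0 : ℝ) < j := by nlinarith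
    calc exp (x - 5) / r ≤ exp (x - 1 - (x - j) ^ 2 / x) / √j := by
          refine div_le_div₀ (exp_pos _).le (exp_le_exp.mpr ?_) (sqrt_pos.mpr hj0) ?_
          · have : (x - j) ^ 2 / x ≤ 4 := by
              rw [div_le_iff₀ (by positivity)]
              nlinarith
            linarith
          · exact sqrt_le_sqrt (by linarith)
      _ ≤ x ^ j / j ! :=
        exp_sub_div_sqrt_le_pow_div_factorial (by positivity) (by exact_mod_cast hj0.ne')
  have hcard : r - 1 ≤ #(Icc p q) := by
    have hp : (p : ℝ) < x - 2 * r + 1 := Nat.ceil_lt_add_one (by nlinarith)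
    have hq : x - r < q + 1 := Nat.lt_floor_add_one _
    have hpq : p ≤ q + 1 := by exact_mod_cast (by linarith : (p : ℝ) ≤ q + 1)
    rw [Nat.card_Icc, Nat.cast_sub hpq]
    push_cast
    linarith
  have hsub : Icc p q ⊆ range (l + 1) := fun j hj => by
    have : q ≤ l := Nat.floor_le_of_le (by linarith)
    simp only [mem_Icc, mem_range] at hj ⊢
    omega
  calc exp (x - 5) / 2 ≤ (r - 1) * (exp (x - 5) / r) := by
        rw [← mul_div_assoc, le_div_iff₀ (by positivity)]
        nlinarith [exp_pos (x - 5)]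
    _ ≤ #(Icc p q) • (exp (x - 5) / r) := by
        rw [nsmul_eq_mul]
        gcongr
    _ ≤ ∑ j ∈ Icc p q, x ^ j / j ! := card_nsmul_le_sum _ _ _ hterm
    _ ≤ ∑ j ∈ range (l + 1), x ^ j / j ! :=
        sum_le_sum_of_subset_of_nonneg hsub fun _ _ _ => by positivity

/-- There are constants `C > 0`, `λ₀ > 0` such that for all `λ ≥ λ₀` and all naturals
`l ≥ λ − √λ`, `1/D_λ(l) ≤ C·e^{−λ}·λ^l/l!`. -/
theorem tail_estimate :
    ∃ C > (0 : ℝ), ∃ lam₀ > (0 : ℝ), ∀ lam : ℝ, lam₀ ≤ lam → ∀ l : ℕ,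
      lam - Real.sqrt lam ≤ (l : ℝ) →
      1 / D lam l ≤ C * Real.exp (-lam) * lam ^ l / (Nat.factorial l : ℝ) := by
  refine ⟨2 * exp 5, by positivity, 9, by norm_num, fun lam hlam l hl => ?_⟩
  have hS := exp_sub_five_div_two_le_sum_range hlam hl
  have hSpos : 0 < ∑ j ∈ range (l + 1), lam ^ j / j ! := lt_of_lt_of_le (by positivity) hS
  rw [D_eq_factorial_div_pow_mul_sum (by linarith) l]
  calc 1 / (l ! / lam ^ l * ∑ j ∈ range (l + 1), lam ^ j / j !)
      = lam ^ l / l ! / ∑ j ∈ range (l + 1), lam ^ j / j ! := by field_simp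
    _ ≤ lam ^ l / l ! / (exp (lam - 5) / 2) := by gcongr
    _ = 2 * exp 5 * exp (-lam) * lam ^ l / l ! := by
        rw [exp_sub, exp_neg]; field_simp
end

section
/- For all natural numbers k and l with 2 ≤ k ≤ l, the falling factorial satisfies l·(l−1)···(l−k+1) = l!/(l−k)! ≤ l^k − (k(k−1)/2)·l^{k−1} + (1/2)·(k(k−1)/2)²·l^{k−2}. -/
/-!
Writing `l - i = l (1 - i/l)` and using `1 - t ≤ exp (-t)` factor by factor gives
`l (l - 1) ⋯ (l - k + 1) ≤ l^k exp (-s/l)` with `s = k(k-1)/2 = ∑_{i<k} i`; the bound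
follows from `exp (-t) ≤ 1 - t + t²/2` for `t ≥ 0`.
-/

open Finset Real Nat

theorem Real.exp_neg_le_one_sub_add_sq_div_two {x : ℝ} (hx : 0 ≤ x) :
    exp (-x) ≤ 1 - x + x ^ 2 / 2 := by
  have hq : 0 < 1 - x + x ^ 2 / 2 := by nlinarith [sq_nonneg (x - 1)]
  rw [exp_neg, inv_le_iff_one_le_mul₀' (exp_pos x)]
  -- `(1 + x + x²/2)(1 - x + x²/2) = 1 + x⁴/4`
  calc (1 : ℝ) ≤ (1 + x + x ^ 2 / 2) * (1 - x + x ^ 2 / 2) := by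
        nlinarith [pow_two_nonneg (x ^ 2)]
    _ ≤ exp x * (1 - x + x ^ 2 / 2) := by gcongr; exact quadratic_le_exp_of_nonneg hx

theorem Finset.prod_one_sub_le_exp_neg_sum {ι : Type*} (s : Finset ι) {a : ι → ℝ}
    (ha : ∀ i ∈ s, a i ≤ 1) : ∏ i ∈ s, (1 - a i) ≤ exp (-∑ i ∈ s, a i) := by
  rw [← sum_neg_distrib, exp_sum]
  exact prod_le_prod (fun i hi ↦ sub_nonneg.2 (ha i hi)) fun i _ ↦ one_sub_le_exp_neg (a i)

theorem Finset.sum_range_natCast_mul_two {R : Type*} [CommRing R] (n : ℕ) :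
    (∑ i ∈ range n, (i : R)) * 2 = n * (n - 1) := by
  induction n with
  | zero => simp
  | succ n ih => rw [sum_range_succ, add_mul, ih]; push_cast; ring

theorem Nat.cast_descFactorial_eq_prod_range {R : Type*} [CommRing R] (n k : ℕ) :
    (n.descFactorial k : R) = ∏ i ∈ range k, ((n : R) - i) := by
  induction k with
  | zero => simp
  | succ k ih =>
    rw [Nat.descFactorial_succ, prod_range_succ, Nat.cast_mul, ih, mul_comm]
    rcases le_or_gt k n with h | h
    · rw [Nat.cast_sub h]
    · rw [← ih, Nat.descFactorial_eq_zero_iff_lt.2 h, Nat.cast_zero, zero_mul, zero_mul]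

theorem Nat.cast_factorial_div_factorial_sub {K : Type*} [Field K] [CharZero K] {n k : ℕ}
    (h : k ≤ n) : (n ! : K) / (n - k)! = n.descFactorial k := by
  rw [← Nat.factorial_mul_descFactorial h, Nat.cast_mul,
    mul_div_cancel_left₀ _ (Nat.cast_ne_zero.2 (Nat.factorial_ne_zero _))]

theorem prod_range_sub_le_pow_mul_exp {x : ℝ} {k : ℕ} (hx : 0 < x) (hk : (k : ℝ) ≤ x + 1) :
    ∏ i ∈ range k, (x - i) ≤ x ^ k * exp (-(k * (k - 1) / 2 / x)) := by
  have hsum : ∑ i ∈ range k, (i : ℝ) / x = k * (k - 1) / 2 / x := by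
    rw [← sum_div, ← sum_range_natCast_mul_two, mul_div_cancel_right₀ _ two_ne_zero]
  calc ∏ i ∈ range k, (x - i) = x ^ k * ∏ i ∈ range k, (1 - i / x) := by
        rw [← card_range k, ← prod_const, card_range, ← prod_mul_distrib]
        refine prod_congr rfl fun i _ ↦ ?_
        field_simp
    _ ≤ x ^ k * exp (-(k * (k - 1) / 2 / x)) := by
        rw [← hsum]
        gcongr
        refine prod_one_sub_le_exp_neg_sum _ fun i hi ↦ ?_
        rw [div_le_one hx]
        have : (i : ℝ) + 1 ≤ k := by exact_mod_cast mem_range.1 hi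
        linarith

/-- For naturals `2 ≤ k ≤ l`, the falling factorial satisfies
`l!/(l−k)! ≤ l^k − (k(k−1)/2)·l^{k−1} + (1/2)·(k(k−1)/2)²·l^{k−2}`. -/
theorem descFactorial_upper_bound (k l : ℕ) (hk : 2 ≤ k) (hkl : k ≤ l) :
    (Nat.factorial l : ℝ) / (Nat.factorial (l - k) : ℝ)
      ≤ (l : ℝ) ^ k - ((k : ℝ) * ((k : ℝ) - 1) / 2) * (l : ℝ) ^ (k - 1)
        + (1 / 2) * ((k : ℝ) * ((k : ℝ) - 1) / 2) ^ 2 * (l : ℝ) ^ (k - 2) := by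
  have hl : (0 : ℝ) < l := by exact_mod_cast (by omega : 0 < l)
  have hk1 : (1 : ℝ) ≤ k := by exact_mod_cast (by omega : 1 ≤ k)
  set s : ℝ := k * (k - 1) / 2
  have hs : 0 ≤ s / l := by positivity
  rw [Nat.cast_factorial_div_factorial_sub hkl, Nat.cast_descFactorial_eq_prod_range]
  calc ∏ i ∈ range k, ((l : ℝ) - i) ≤ l ^ k * exp (-(s / l)) :=
        prod_range_sub_le_pow_mul_exp hl (by exact_mod_cast (by omega : k ≤ l + 1))
    _ ≤ l ^ k * (1 - s / l + (s / l) ^ 2 / 2) := by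
        gcongr; exact exp_neg_le_one_sub_add_sq_div_two hs
    _ = l ^ k - s * l ^ (k - 1) + 1 / 2 * s ^ 2 * l ^ (k - 2) := by
        obtain ⟨m, rfl⟩ : ∃ m, k = m + 2 := ⟨k - 2, by omega⟩
        simp only [Nat.add_sub_cancel, Nat.add_succ_sub_one]
        field_simp
        ring
end

section
/- There exists a constant λ₀ > 0 such that for all real λ ≥ λ₀ and all natural numbers l with 1 ≤ l ≤ λ − √λ, one has (l/λ)^l ≤ 1/λ. -/
/-!
For `2l ≤ λ` the bound is elementary: `(l/λ)^l ≤ 2^(1-l) · l/λ ≤ 1/λ` since `l ≤ 2^(l-1)`. For `λ/2 < l ≤ λ - √λ`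
we have `l/λ ≤ 1 - 1/√λ ≤ exp (-1/√λ)`, so `(l/λ)^l ≤ exp (-l/√λ) ≤ exp (-√λ/2)`, which is at most
`1/λ` as soon as `log λ ≤ √λ/2`; writing `λ = t⁴` this follows from `log t ≤ t - 1` once `t ≥ 8`.
-/

open Real

lemma Nat.le_two_pow_pred (n : ℕ) : n ≤ 2 ^ (n - 1) := by
  have := Nat.lt_two_pow_self (n := n - 1)
  omega

lemma div_pow_le_one_div_of_two_mul_le {l : ℕ} {x : ℝ} (hl : 1 ≤ l) (h : 2 * (l : ℝ) ≤ x) :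
    ((l : ℝ) / x) ^ l ≤ 1 / x := by
  have hx : 0 < x := by
    have : (1 : ℝ) ≤ l := by exact_mod_cast hl
    linarith
  have hhalf : (l : ℝ) / x ≤ 1 / 2 := by
    rw [div_le_iff₀ hx]
    linarith
  have hl_pow : (l : ℝ) ≤ 2 ^ (l - 1) := by exact_mod_cast Nat.le_two_pow_pred l
  calc ((l : ℝ) / x) ^ l = ((l : ℝ) / x) ^ (l - 1) * ((l : ℝ) / x) := by
        rw [← pow_succ, Nat.sub_add_cancel hl]
    _ ≤ (1 / 2) ^ (l - 1) * ((l : ℝ) / x) := by gcongr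
    _ = ((l : ℝ) / 2 ^ (l - 1)) / x := by rw [one_div_pow]; ring
    _ ≤ 1 / x := by
        gcongr
        rw [div_le_one (by positivity)]
        exact hl_pow

lemma pow_le_exp_neg_mul_of_le_one_sub {x s : ℝ} (n : ℕ) (hx0 : 0 ≤ x) (hx : x ≤ 1 - s) :
    x ^ n ≤ exp (-(n * s)) := by
  have hxs : x ≤ exp (-s) := by linarith [add_one_le_exp (-s)]
  calc x ^ n ≤ exp (-s) ^ n := pow_le_pow_left₀ hx0 hxs n
    _ = exp (-(n * s)) := by rw [← exp_nat_mul]; ring_nf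

lemma log_le_sqrt_div_two {x : ℝ} (hx : 4096 ≤ x) : log x ≤ √x / 2 := by
  set t := √√x
  have ht8 : 8 ≤ t := by
    rw [le_sqrt (by norm_num) (sqrt_nonneg _), le_sqrt (by norm_num) (by linarith)]
    linarith
  have hsqrt : √x = t ^ 2 := (sq_sqrt (sqrt_nonneg x)).symm
  have hx_eq : x = t ^ 4 := by
    rw [show t ^ 4 = (t ^ 2) ^ 2 by ring, ← hsqrt, sq_sqrt (by linarith)]
  have hlog_t : log t ≤ t - 1 := log_le_sub_one_of_pos (by linarith)
  rw [hsqrt, hx_eq, log_pow]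
  push_cast
  nlinarith

lemma div_pow_le_one_div_of_le_sub_sqrt {l : ℕ} {x : ℝ} (hx : 4096 ≤ x) (hl : x ≤ 2 * l)
    (hle : (l : ℝ) ≤ x - √x) : ((l : ℝ) / x) ^ l ≤ 1 / x := by
  have hx0 : 0 < x := by linarith
  have hs : 0 < √x := sqrt_pos.mpr hx0
  have hss : √x * √x = x := mul_self_sqrt hx0.le
  have hratio : (l : ℝ) / x ≤ 1 - 1 / √x := by
    rw [div_le_iff₀ hx0, sub_mul, one_div_mul_eq_div, div_eq_of_eq_mul hs.ne' hss.symm]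
    linarith
  have hlog : log x ≤ l * (1 / √x) := by
    have : √x / 2 ≤ l * (1 / √x) := by
      rw [mul_one_div, div_le_div_iff₀ (by norm_num) hs]
      linarith
    linarith [log_le_sqrt_div_two hx]
  calc ((l : ℝ) / x) ^ l ≤ exp (-(l * (1 / √x))) :=
        pow_le_exp_neg_mul_of_le_one_sub l (by positivity) hratio
    _ ≤ exp (-log x) := by gcongr
    _ = 1 / x := by rw [exp_neg, exp_log hx0, one_div]

/-- There is a constant `λ₀ > 0` such that for all `λ ≥ λ₀` and all naturals
`1 ≤ l ≤ λ − √λ`, `(l/λ)^l ≤ 1/λ`. -/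
theorem ratio_pow_le :
    ∃ lam₀ > (0 : ℝ), ∀ lam : ℝ, lam₀ ≤ lam → ∀ l : ℕ, 1 ≤ l →
      (l : ℝ) ≤ lam - Real.sqrt lam →
      ((l : ℝ) / lam) ^ l ≤ 1 / lam := by
  refine ⟨4096, by norm_num, fun lam hlam l hl hle => ?_⟩
  rcases le_or_gt (2 * (l : ℝ)) lam with hsmall | hlarge
  · exact div_pow_le_one_div_of_two_mul_le hl hsmall
  · exact div_pow_le_one_div_of_le_sub_sqrt hlam hlarge.le hle
end

section
/- There exist constants C > 0 and λ₀ > 0 such that for all real λ ≥ λ₀ and all natural numbers l with l ≤ λ − √λ, one has l²·(l/λ)^l ≤ C/λ. -/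
/-!
Write `x = l / λ`. For `l ≤ 3` the bound is `l² x^l ≤ l² x ≤ 27 / λ`. For `4 ≤ l ≤ √λ` one has
`l² x^l ≤ l² x⁴ = l⁶ / λ⁴ ≤ 1 / λ`. For `√λ ≤ l ≤ λ - √λ`, the inequality `x ≤ exp (x - 1)` gives
`x^l ≤ exp (-l (λ - l) / λ) ≤ exp (-√λ / 2)`, since both `l` and `λ - l` are at least `√λ`, and
`exp (√λ / 2)` grows faster than `λ³ ≥ λ l²`.
-/

open Real Nat

lemma pow_le_exp_neg_mul_one_sub {x : ℝ} (hx : 0 ≤ x) (n : ℕ) :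
    x ^ n ≤ exp (-(n * (1 - x))) := by
  calc x ^ n = (1 - (1 - x)) ^ n := by ring
    _ ≤ exp (-(1 - x)) ^ n := pow_le_pow_left₀ (by linarith) (one_sub_le_exp_neg _) n
    _ = exp (-(n * (1 - x))) := by rw [← exp_nat_mul, mul_neg]

/-- `46080 = 2⁶ · 6!` comes from the sixth Taylor term of `exp (√λ / 2)`. -/
lemma cube_le_mul_exp_sqrt_div_two {lam : ℝ} (hlam : 0 ≤ lam) :
    lam ^ 3 ≤ 46080 * exp (√lam / 2) := by
  have htaylor := pow_div_factorial_le_exp (√lam / 2) (by positivity) 6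
  have hpow : (√lam / 2) ^ 6 = lam ^ 3 / 64 := by
    rw [div_pow, show √lam ^ 6 = (√lam ^ 2) ^ 3 by ring, sq_sqrt hlam]; norm_num
  rw [hpow, show (6 ! : ℝ) = 720 by norm_num [Nat.factorial]] at htaylor
  linarith

lemma mul_sqrt_le_two_mul_mul_sub {lam a : ℝ} (ha : √lam ≤ a) (ha' : a ≤ lam - √lam) :
    lam * √lam ≤ 2 * (a * (lam - a)) := by
  have hs := sqrt_nonneg lam
  -- the larger of `a` and `λ - a` is at least `λ / 2`, the smaller at least `√λ`
  rcases le_total a (lam / 2) with h | h <;> nlinarith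

section

variable {lam : ℝ} {l : ℕ}

lemma sq_mul_div_pow_le_of_le_three (hlam : 0 < lam) (hl : (l : ℝ) ≤ lam) (h3 : l ≤ 3) :
    (l : ℝ) ^ 2 * ((l : ℝ) / lam) ^ l ≤ 27 / lam := by
  rcases Nat.eq_zero_or_pos l with rfl | hpos
  · rw [Nat.cast_zero, zero_pow two_ne_zero, zero_mul]; positivity
  have hx1 : (l : ℝ) / lam ≤ 1 := div_le_one_of_le₀ hl hlam.le
  have h3' : (l : ℝ) ≤ 3 := by exact_mod_cast h3
  calc (l : ℝ) ^ 2 * ((l : ℝ) / lam) ^ l ≤ (l : ℝ) ^ 2 * ((l : ℝ) / lam) := by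
        gcongr; exact pow_le_of_le_one (by positivity) hx1 hpos.ne'
    _ = (l : ℝ) ^ 3 / lam := by ring
    _ ≤ 3 ^ 3 / lam := by gcongr
    _ = 27 / lam := by norm_num

lemma sq_mul_div_pow_le_of_four_le_of_le_sqrt (hlam : 0 < lam) (h4 : 4 ≤ l)
    (hl : (l : ℝ) ≤ √lam) : (l : ℝ) ^ 2 * ((l : ℝ) / lam) ^ l ≤ 1 / lam := by
  have hsq : (l : ℝ) ^ 2 ≤ lam := (le_sqrt (by positivity) hlam.le).mp hl
  have h4' : (4 : ℝ) ≤ l := by exact_mod_cast h4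
  have hx1 : (l : ℝ) / lam ≤ 1 := div_le_one_of_le₀ (by nlinarith) hlam.le
  calc (l : ℝ) ^ 2 * ((l : ℝ) / lam) ^ l ≤ (l : ℝ) ^ 2 * ((l : ℝ) / lam) ^ 4 :=
        mul_le_mul_of_nonneg_left (pow_le_pow_of_le_one (by positivity) hx1 h4) (by positivity)
    _ = ((l : ℝ) ^ 2) ^ 3 / lam ^ 4 := by ring
    _ ≤ lam ^ 3 / lam ^ 4 := by gcongr
    _ = 1 / lam := by field_simp

lemma sq_mul_div_pow_le_of_sqrt_le (hlam : 0 < lam) (hl : √lam ≤ l) (hl' : (l : ℝ) ≤ lam - √lam) :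
    (l : ℝ) ^ 2 * ((l : ℝ) / lam) ^ l ≤ 46080 / lam := by
  have hs := sqrt_nonneg lam
  have hexponent : √lam / 2 ≤ l * (1 - l / lam) := by
    rw [show (l : ℝ) * (1 - l / lam) = l * (lam - l) / lam by field_simp, le_div_iff₀ hlam]
    linarith [mul_sqrt_le_two_mul_mul_sub hl hl']
  calc (l : ℝ) ^ 2 * ((l : ℝ) / lam) ^ l ≤ lam ^ 2 * exp (-(√lam / 2)) := by
        gcongr
        · linarith
        · exact (pow_le_exp_neg_mul_one_sub (by positivity) l).trans
            (exp_le_exp.mpr (neg_le_neg hexponent))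
    _ = lam ^ 3 / exp (√lam / 2) / lam := by rw [exp_neg]; field_simp
    _ ≤ 46080 / lam := by
        gcongr
        exact (div_le_iff₀ (exp_pos _)).mpr (cube_le_mul_exp_sqrt_div_two hlam.le)

end

/-- There are constants `C > 0`, `λ₀ > 0` such that for all `λ ≥ λ₀` and all naturals
`l ≤ λ − √λ`, `l²·(l/λ)^l ≤ C/λ`. -/
theorem sq_ratio_pow_le :
    ∃ C > (0 : ℝ), ∃ lam₀ > (0 : ℝ), ∀ lam : ℝ, lam₀ ≤ lam → ∀ l : ℕ,
      (l : ℝ) ≤ lam - Real.sqrt lam →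
      (l : ℝ) ^ 2 * ((l : ℝ) / lam) ^ l ≤ C / lam := by
  refine ⟨46080, by norm_num, 1, one_pos, fun lam hlam l hl => ?_⟩
  have hlam0 : 0 < lam := one_pos.trans_le hlam
  rcases le_or_gt (l : ℝ) √lam with hsmall | hlarge
  · rcases le_or_gt l 3 with h3 | h4
    · calc _ ≤ 27 / lam := sq_mul_div_pow_le_of_le_three hlam0 (by linarith [sqrt_nonneg lam]) h3
        _ ≤ 46080 / lam := by gcongr; norm_num
    · calc _ ≤ 1 / lam := sq_mul_div_pow_le_of_four_le_of_le_sqrt hlam0 h4 hsmall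
        _ ≤ 46080 / lam := by gcongr; norm_num
  · exact sq_mul_div_pow_le_of_sqrt_le hlam0 hlarge.le hl
end

section
/- For every natural number n there exist constants C > 0 and λ₀ > 0 such that for all real λ ≥ λ₀, the finite sum over natural numbers l with √λ ≤ λ − l (equivalently l ≤ λ − √λ) satisfies |∑_{0 ≤ l ≤ λ−√λ} l^n/(λ − l) − λ^n·(log λ)/2| ≤ C·λ^n. -/
/-!
Write `l ^ n / (λ - l) = λ ^ n / (λ - l) - (λ ^ n - l ^ n) / (λ - l)`. The second quotient is a
difference quotient of `t ↦ t ^ n`, bounded by `n λ ^ (n - 1)`, and there are at most `λ` terms,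
so it contributes `O(λ ^ n)`. The first part is `λ ^ n` times a harmonic-type sum over the
denominators `λ - l ∈ [√λ, λ]`, which telescopes against `log` up to `O(1)`:
it is `log λ - log √λ + O(1) = (log λ) / 2 + O(1)`.
-/

section

open Real Finset

theorem abs_pow_sub_pow_div_sub_le {α : Type*} [Field α] [LinearOrder α] [IsStrictOrderedRing α]
    (a b : α) (n : ℕ) : |(a ^ n - b ^ n) / (a - b)| ≤ n * max |a| |b| ^ (n - 1) := by
  rcases eq_or_ne a b with rfl | hab
  · simp only [sub_self, div_zero, abs_zero]
    positivity
  rw [abs_div, div_le_iff₀ (abs_pos.2 (sub_ne_zero.2 hab))]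
  linarith [abs_pow_sub_pow_le a b n]

theorem abs_sum_range_pow_sub_pow_div_sub_le {x : ℝ} {N : ℕ} (hN : (N : ℝ) ≤ x) (n : ℕ) :
    |∑ l ∈ range N, (x ^ n - (l : ℝ) ^ n) / (x - l)| ≤ n * x ^ n := by
  have hx : 0 ≤ x := (Nat.cast_nonneg N).trans hN
  have hterm : ∀ l ∈ range N, |(x ^ n - (l : ℝ) ^ n) / (x - l)| ≤ n * x ^ (n - 1) := by
    intro l hl
    have hlx : (l : ℝ) ≤ x := by
      exact (Nat.cast_le.2 (mem_range.1 hl).le).trans hN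
    refine (abs_pow_sub_pow_div_sub_le _ _ n).trans ?_
    gcongr
    exact max_le (abs_of_nonneg hx).le (by rwa [Nat.abs_cast])
  calc |∑ l ∈ range N, (x ^ n - (l : ℝ) ^ n) / (x - l)|
      ≤ ∑ l ∈ range N, |(x ^ n - (l : ℝ) ^ n) / (x - l)| := abs_sum_le_sum_abs _ _
    _ ≤ N * (n * x ^ (n - 1)) := by simpa using sum_le_sum hterm
    _ ≤ x * (n * x ^ (n - 1)) := by gcongr
    _ = n * x ^ n := by
      rcases n with _ | n
      · simp
      · rw [Nat.add_sub_cancel, pow_succ]; ring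

theorem log_add_one_sub_log_le_inv {y : ℝ} (hy : 0 < y) : log (y + 1) - log y ≤ y⁻¹ := by
  have h := log_le_sub_one_of_pos (show 0 < (y + 1) / y by positivity)
  rw [log_div (by positivity) hy.ne'] at h
  calc log (y + 1) - log y ≤ (y + 1) / y - 1 := h
    _ = y⁻¹ := by field_simp; ring

theorem inv_le_log_sub_log_sub_one {y : ℝ} (hy : 1 < y) : y⁻¹ ≤ log y - log (y - 1) := by
  have hy' : 0 < y - 1 := by linarith
  have h := one_sub_inv_le_log_of_pos (show 0 < y / (y - 1) by positivity)
  rw [log_div (by positivity) hy'.ne'] at h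
  calc y⁻¹ = 1 - (y / (y - 1))⁻¹ := by field_simp; ring
    _ ≤ log y - log (y - 1) := h

theorem sum_range_inv_sub_le_log_sub_log {x : ℝ} {N : ℕ} (hN : (N : ℝ) < x) :
    ∑ l ∈ range N, (x - l)⁻¹ ≤ log x - log (x - N) := by
  have htel := sum_range_sub' (fun l : ℕ => log (x - l)) N
  simp only [Nat.cast_zero, sub_zero, Nat.cast_add_one] at htel
  rw [← htel]
  refine sum_le_sum fun l hl => ?_
  have hlN : (l : ℝ) + 1 ≤ N := by exact_mod_cast mem_range.1 hl
  rw [← sub_sub]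
  exact inv_le_log_sub_log_sub_one (by linarith)

theorem log_sub_log_le_sum_range_inv_sub {x : ℝ} {N : ℕ} (hN : (N : ℝ) < x + 1) :
    log (x + 1) - log (x + 1 - N) ≤ ∑ l ∈ range N, (x - l)⁻¹ := by
  have htel := sum_range_sub' (fun l : ℕ => log (x + 1 - l)) N
  simp only [Nat.cast_zero, sub_zero, Nat.cast_add_one] at htel
  rw [← htel]
  refine sum_le_sum fun l hl => ?_
  have hlN : (l : ℝ) + 1 ≤ N := by exact_mod_cast mem_range.1 hl
  rw [show x + 1 - l = (x - l) + 1 by ring, show x + 1 - (l + 1) = x - l by ring]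
  exact log_add_one_sub_log_le_inv (by linarith)

theorem abs_sum_range_inv_sub_sub_half_log_le_one {x : ℝ} (hx : 4 ≤ x) :
    |∑ l ∈ range (⌊x - √x⌋₊ + 1), (x - l)⁻¹ - log x / 2| ≤ 1 := by
  set s := √x
  set M := ⌊x - s⌋₊
  have hs : 2 ≤ s := by
    rw [show (2 : ℝ) = √4 by rw [show (4 : ℝ) = 2 ^ 2 by norm_num, sqrt_sq zero_le_two]]
    exact sqrt_le_sqrt hx
  have hss : s * s = x := mul_self_sqrt (by linarith)
  have hMle : (M : ℝ) ≤ x - s := Nat.floor_le (by nlinarith)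
  have hMgt : x - s < M + 1 := Nat.lt_floor_add_one _
  have hlogx : log x = 2 * log s := by rw [log_sqrt (by linarith)]; ring
  have hupper := sum_range_inv_sub_le_log_sub_log (x := x) (N := M + 1) (by push_cast; linarith)
  have hlower := log_sub_log_le_sum_range_inv_sub (x := x) (N := M + 1) (by push_cast; linarith)
  push_cast at hupper hlower
  have hnear_up : log s - log (x - (M + 1)) ≤ 1 := by
    have h1 : log (s - 1) ≤ log (x - (M + 1)) := log_le_log (by linarith) (by linarith)
    have h2 := log_add_one_sub_log_le_inv (y := s - 1) (by linarith)
    rw [sub_add_cancel] at h2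
    have h3 : (s - 1)⁻¹ ≤ 1 := inv_le_one_of_one_le₀ (by linarith)
    linarith
  have hnear_low : log (x + 1 - (M + 1)) - log s ≤ 1 := by
    have h1 : log (x + 1 - (M + 1)) ≤ log (s + 1) := log_le_log (by linarith) (by linarith)
    have h2 := log_add_one_sub_log_le_inv (y := s) (by linarith)
    have h3 : s⁻¹ ≤ 1 := inv_le_one_of_one_le₀ (by linarith)
    linarith
  have hlogx1 : log x ≤ log (x + 1) := log_le_log (by linarith) (by linarith)
  rw [abs_le]
  constructor <;> linarith

end

/-- For every natural `n` there are constants `C > 0`, `λ₀ > 0` such that for all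
`λ ≥ λ₀`, the finite sum over naturals `l ≤ λ − √λ` satisfies
`|∑_{0 ≤ l ≤ λ−√λ} l^n/(λ − l) − λ^n·(log λ)/2| ≤ C·λ^n`. -/
theorem body_log_sum (n : ℕ) :
    ∃ C > (0 : ℝ), ∃ lam₀ > (0 : ℝ), ∀ lam : ℝ, lam₀ ≤ lam →
      |(∑ l ∈ Finset.range (⌊lam - Real.sqrt lam⌋₊ + 1), (l : ℝ) ^ n / (lam - (l : ℝ)))
          - lam ^ n * Real.log lam / 2|
        ≤ C * lam ^ n := by
  refine ⟨n + 1, by positivity, 4, by norm_num, fun lam hlam => ?_⟩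
  set N := ⌊lam - Real.sqrt lam⌋₊ + 1
  have hN : (N : ℝ) ≤ lam := by
    have hfloor : (⌊lam - Real.sqrt lam⌋₊ : ℝ) ≤ lam - Real.sqrt lam :=
      Nat.floor_le (by nlinarith [Real.sq_sqrt (show 0 ≤ lam by linarith)])
    have hsqrt : 1 ≤ Real.sqrt lam := Real.one_le_sqrt.2 (by linarith)
    push_cast [N]
    linarith
  have hsplit : ∑ l ∈ Finset.range N, (l : ℝ) ^ n / (lam - l)
      = lam ^ n * ∑ l ∈ Finset.range N, (lam - l)⁻¹
        - ∑ l ∈ Finset.range N, (lam ^ n - (l : ℝ) ^ n) / (lam - l) := by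
    rw [Finset.mul_sum, ← Finset.sum_sub_distrib]
    exact Finset.sum_congr rfl fun l _ => by ring
  have hpow : 0 < lam ^ n := by positivity
  have hharm := abs_sum_range_inv_sub_sub_half_log_le_one hlam
  have herr := abs_sum_range_pow_sub_pow_div_sub_le hN n
  rw [hsplit]
  calc _ = |lam ^ n * (∑ l ∈ Finset.range N, (lam - l)⁻¹ - Real.log lam / 2)
          - ∑ l ∈ Finset.range N, (lam ^ n - (l : ℝ) ^ n) / (lam - l)| := by ring_nf
    _ ≤ lam ^ n * 1 + n * lam ^ n := by
      refine (abs_sub _ _).trans (add_le_add ?_ herr)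
      rw [abs_mul, abs_of_pos hpow]
      exact mul_le_mul_of_nonneg_left hharm hpow.le
    _ = (n + 1) * lam ^ n := by ring
end
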